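/- arXiv:2203.00313 — 2 statements merged into one kernel-verified Lean document; each statement's English description precedes it below -/
import Mathlib

section
/- Let H be a normal subgroup of G and let b be a block of kH of defect 0 (i.e. the trivial subgroup is a defect group of b as a block of kH). Let T = {g ∈ G : g^{-1}bg = b} be the inertial group of b in G, and assume |T : H| ≡ 0 mod p. Then b·(kH)_1^G = 0, where (kH)_1^G = Tr_1^G(kH) = { Σ_{g∈G} g^{-1}ag : a ∈ kH } inside kG. -/
noncomputable section

namespace LowerDefect

variable (p : ℕ) (k : Type) [Field k] (G : Type) [Group G]

/-- The conjugate `g⁻¹ a g` of an element of the group algebra. -/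
def conjElt (g : G) (a : MonoidAlgebra k G) : MonoidAlgebra k G :=
  MonoidAlgebra.of k G g⁻¹ * a * MonoidAlgebra.of k G g

/-- `T` is a set of representatives of the right cosets of `H` in `K`. -/
def IsTransversal (H K : Subgroup G) (T : Finset G) : Prop :=
  (T : Set G) ⊆ (K : Set G) ∧ ∀ x ∈ K, ∃! t, t ∈ T ∧ x * t⁻¹ ∈ H

/-- The set `X_H^K = Tr_H^K(X ∩ (kG)^H)` of relative traces from `H` to `K`
of `H`-fixed elements of `X`. -/
def relTraceSet (X : Set (MonoidAlgebra k G)) (H K : Subgroup G) : Set (MonoidAlgebra k G) :=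
  { y | ∃ a ∈ X, (∀ h ∈ H, conjElt k G h a = a) ∧
      ∃ T : Finset G, IsTransversal G H K T ∧ y = ∑ t ∈ T, conjElt k G t a }

/-- `a` lies in the subalgebra `kL` of `kG` spanned by the elements of `L`. -/
def InSubgroupAlgebra (L : Subgroup G) (a : MonoidAlgebra k G) : Prop :=
  ∀ g : G, a.coeff g ≠ 0 → g ∈ L

/-- `e` is an idempotent of `kL` commuting with `kL`, i.e. a central idempotent
of the subalgebra `kL` of `kG`. -/
def IsCentralIdemOf (L : Subgroup G) (e : MonoidAlgebra k G) : Prop :=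
  InSubgroupAlgebra k G L e ∧
    (∀ x ∈ L, MonoidAlgebra.of k G x * e = e * MonoidAlgebra.of k G x) ∧ e * e = e

/-- `e` is a block of `kL`: a primitive idempotent of the center of `kL`. -/
def IsBlockOf (L : Subgroup G) (e : MonoidAlgebra k G) : Prop :=
  IsCentralIdemOf k G L e ∧ e ≠ 0 ∧
    ∀ c d : MonoidAlgebra k G, IsCentralIdemOf k G L c → IsCentralIdemOf k G L d →
      c * d = 0 → d * c = 0 → e = c + d → c = 0 ∨ d = 0

/-- `e` is a block of `kG`. -/
abbrev IsBlock (e : MonoidAlgebra k G) : Prop := IsBlockOf k G ⊤ e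

/-- `P` is a defect group of the block `e` of `kL`: `P` is minimal with
`e ∈ (kL)_P^L`. -/
def IsDefectGroupOf (L : Subgroup G) (e : MonoidAlgebra k G) (P : Subgroup G) : Prop :=
  P ≤ L ∧ e ∈ relTraceSet k G {a | InSubgroupAlgebra k G L a} P L ∧
    ∀ R : Subgroup G, R < P → e ∉ relTraceSet k G {a | InSubgroupAlgebra k G L a} R L

/-- `P` is a defect group of the block `e` of `kG`. -/
abbrev IsDefectGroup (e : MonoidAlgebra k G) (P : Subgroup G) : Prop :=
  IsDefectGroupOf k G ⊤ e P

/-- The subspace `kL_{p'}` of `kG`: the span of the `p`-regular elements of `L`,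
described by its support condition. -/
def pRegSet (L : Subgroup G) : Set (MonoidAlgebra k G) :=
  { a | ∀ g : G, a.coeff g ≠ 0 → g ∈ L ∧ ¬ p ∣ orderOf g }

/-- The subspace `e·(kL_{p'})_R^L` of `kG`. -/
def ldSubmodule (L : Subgroup G) (e : MonoidAlgebra k G) (R : Subgroup G) :
    Submodule k (MonoidAlgebra k G) :=
  Submodule.span k {x | ∃ y ∈ relTraceSet k G (pRegSet p k G L) R L, x = e * y}

/-- The multiplicity `m_e^1(Q)` of `Q` as a lower defect group of the block `e` of `kL`
associated with `p`-regular classes: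
`dim_k( e·(kL_{p'})_Q^L / Σ_{R<Q} e·(kL_{p'})_R^L )`. -/
def lowerDefectMult (L : Subgroup G) (e : MonoidAlgebra k G) (Q : Subgroup G) : ℕ :=
  Module.finrank k
    (↥(ldSubmodule p k G L e Q) ⧸
      Submodule.comap (ldSubmodule p k G L e Q).subtype
        (⨆ (R : Subgroup G) (_ : R < Q), ldSubmodule p k G L e R))

/-- The conjugate subgroup `g Q g⁻¹`. -/
def conjSub (g : G) (Q : Subgroup G) : Subgroup G :=
  Subgroup.map (MulAut.conj g).toMonoidHom Q

/-- `Q ≤_G R` : `Q` is `G`-conjugate to a subgroup of `R`. -/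
def leG (Q R : Subgroup G) : Prop := ∃ g : G, conjSub G g Q ≤ R

/-- `Q <_G R` : `Q` is `G`-conjugate to a proper subgroup of `R`. -/
def ltG (Q R : Subgroup G) : Prop := ∃ g : G, conjSub G g Q < R

/-- `Q =_G R` : `Q` and `R` are `G`-conjugate. -/
def eqG (Q R : Subgroup G) : Prop := ∃ g : G, conjSub G g Q = R

/-- `C_P(Q)`, the centralizer of `Q` in `P`. In particular `centIn Q Q = Z(Q)`. -/
def centIn (P Q : Subgroup G) : Subgroup G := P ⊓ Subgroup.centralizer (Q : Set G)

/-- `Q` is a Sylow `p`-subgroup of `L`. -/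
def IsSylowIn (Q L : Subgroup G) : Prop :=
  Q ≤ L ∧ IsPGroup p ↥Q ∧ ¬ p ∣ Q.relIndex L

open scoped Classical in
/-- The Brauer homomorphism with respect to `Q`: the `k`-linear projection of `kG`
onto `kC_G(Q)` fixing each element of `C_G(Q)` and killing all other group elements. -/
def brauerHom (Q : Subgroup G) (a : MonoidAlgebra k G) : MonoidAlgebra k G :=
  MonoidAlgebra.ofCoeff (Finsupp.filter (fun g => g ∈ Subgroup.centralizer (Q : Set G)) a.coeff)

/-- A block of principal type: `Br_Q(e)` is a block of `kC_G(Q)` for every `p`-subgroup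
`Q` contained in a defect group of `e`. -/
def IsPrincipalType (e : MonoidAlgebra k G) : Prop :=
  IsBlock k G e ∧
    ∀ Q : Subgroup G, IsPGroup p ↥Q →
      (∃ P : Subgroup G, IsDefectGroup k G e P ∧ Q ≤ P) →
      IsBlockOf k G (Subgroup.centralizer (Q : Set G)) (brauerHom k G Q e)

open scoped Classical in
/-- The class sum `Ĉ` of the conjugacy class of `x`. -/
def classSum [Fintype G] (x : G) : MonoidAlgebra k G :=
  ∑ y ∈ Finset.univ.filter (fun y => IsConj x y), MonoidAlgebra.of k G y

variable (M : Type) [AddCommGroup M] [Module (MonoidAlgebra k G) M]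

/-- `M` is relatively `H`-projective, via Higman's criterion: some `kH`-endomorphism
of `M` has relative trace `Tr_H^G` equal to the identity.  (This is equivalent to `M`
being a direct summand of `Ind_H^G Res_H^G M`.) -/
def IsRelProjective (H : Subgroup G) : Prop :=
  ∃ f : M →+ M,
    (∀ (c : k) (m : M), f (algebraMap k (MonoidAlgebra k G) c • m)
        = algebraMap k (MonoidAlgebra k G) c • f m) ∧
    (∀ h ∈ H, ∀ m : M, f (MonoidAlgebra.of k G h • m) = MonoidAlgebra.of k G h • f m) ∧
    ∃ T : Finset G, IsTransversal G H ⊤ T ∧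
      ∀ m : M, (∑ t ∈ T, MonoidAlgebra.of k G t⁻¹ • f (MonoidAlgebra.of k G t • m)) = m

/-- `Q` is a vertex of `M`: a minimal subgroup relative to which `M` is projective. -/
def IsVertex (Q : Subgroup G) : Prop :=
  IsRelProjective k G M Q ∧ ∀ R : Subgroup G, R < Q → ¬ IsRelProjective k G M R

/-- `M` is an indecomposable `kG`-module. -/
def IsIndecomposable : Prop :=
  Nontrivial M ∧ ∀ e : M →ₗ[MonoidAlgebra k G] M, e.comp e = e → e = 0 ∨ e = LinearMap.id

/-- `M` is a simple `kGb`-module: a simple `kG`-module on which `b` acts as the identity. -/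
def IsSimpleBlockModule (b : MonoidAlgebra k G) : Prop :=
  IsSimpleModule (MonoidAlgebra k G) M ∧ ∀ m : M, b • m = m

/-- The dimension of a `kG`-module over `k`. -/
def kdim : ℕ :=
  letI := Module.compHom M (algebraMap k (MonoidAlgebra k G))
  Module.finrank k M

/-- The complexity of `M` is at most `s`: there is a projective resolution of `M` by
finitely generated projective `kG`-modules with `dim_k P_n ≤ C·n^(s-1)` for `n ≥ 1`. -/
def HasComplexityLE (s : ℕ) : Prop :=
  ∃ (P : ℕ → ModuleCat (MonoidAlgebra k G))
    (d : ∀ n : ℕ, ↥(P (n + 1)) →ₗ[MonoidAlgebra k G] ↥(P n))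
    (ε : ↥(P 0) →ₗ[MonoidAlgebra k G] M),
      (∀ n, Module.Projective (MonoidAlgebra k G) ↥(P n)) ∧
      (∀ n, Module.Finite (MonoidAlgebra k G) ↥(P n)) ∧
      Function.Surjective ε ∧
      LinearMap.range (d 0) = LinearMap.ker ε ∧
      (∀ n, LinearMap.range (d (n + 1)) = LinearMap.ker (d n)) ∧
      ∃ C : ℝ, ∀ n : ℕ, 1 ≤ n →
        (kdim k G ↥(P n) : ℝ) ≤ C * (n : ℝ) ^ ((s : ℝ) - 1)

/-- The complexity `c(M)`: the smallest `s` as above. -/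
def complexity : ℕ := sInf { s : ℕ | HasComplexityLE k G M s }

/-- `E` is an elementary abelian `p`-group. -/
def IsElemAbelian (E : Subgroup G) : Prop :=
  (∀ x ∈ E, x ^ p = 1) ∧ ∀ x ∈ E, ∀ y ∈ E, x * y = y * x

/-- The `p`-rank of `Q`: the largest rank of an elementary abelian `p`-subgroup of `Q`. -/
def pRank (Q : Subgroup G) : ℕ :=
  sSup { r : ℕ | ∃ E : Subgroup G, E ≤ Q ∧ IsElemAbelian p G E ∧ Nat.card E = p ^ r }

/-- `G` is `p`-solvable: it has a normal series each of whose factors is a `p`-group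
or a group of order prime to `p`. -/
def IsPSolvable : Prop :=
  ∃ (n : ℕ) (c : Fin (n + 1) → Subgroup G),
    c 0 = ⊥ ∧ c (Fin.last n) = ⊤ ∧
      ∀ i : Fin n, c i.castSucc ≤ c i.succ ∧
        ((c i.castSucc).subgroupOf (c i.succ)).Normal ∧
        ((∃ m : ℕ, (c i.castSucc).relIndex (c i.succ) = p ^ m) ∨
          ¬ p ∣ (c i.castSucc).relIndex (c i.succ))

/-- `G` is `p`-nilpotent: it has a normal subgroup of order prime to `p` and of
`p`-power index. -/
def IsPNilpotent : Prop :=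
  ∃ N : Subgroup G, N.Normal ∧ ¬ p ∣ Nat.card N ∧ ∃ n : ℕ, N.index = p ^ n

/-- `P` is a projective cover of `M`: `P` is projective and admits a surjection onto `M`
with superfluous kernel. -/
def IsProjectiveCover (P : Type) [AddCommGroup P] [Module (MonoidAlgebra k G) P] : Prop :=
  Module.Projective (MonoidAlgebra k G) P ∧
    ∃ f : P →ₗ[MonoidAlgebra k G] M, Function.Surjective f ∧
      ∀ N : Submodule (MonoidAlgebra k G) P, N ⊔ LinearMap.ker f = ⊤ → N = ⊤


-- additional defs for statement 12

/-- `U` is a `k`-subspace of `M` stable under the action of `Q`, i.e. a `kQ`-submodule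
of `Res_Q^G M`. -/
def IsQSubspace (Q : Subgroup G) (U : Set M) : Prop :=
  (0 : M) ∈ U ∧ (∀ u ∈ U, ∀ v ∈ U, u + v ∈ U) ∧
    (∀ (c : k), ∀ u ∈ U, algebraMap k (MonoidAlgebra k G) c • u ∈ U) ∧
    ∀ q ∈ Q, ∀ u ∈ U, MonoidAlgebra.of k G q • u ∈ U

/-- The subset `U` of `M` has a `k`-basis with `n` elements, i.e. `dim_k U = n`. -/
def HasKDim (U : Set M) (n : ℕ) : Prop :=
  ∃ f : Fin n → M, (∀ i, f i ∈ U) ∧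
    ∀ u ∈ U, ∃! c : Fin n → k, u = ∑ i, algebraMap k (MonoidAlgebra k G) (c i) • f i


/-!
Write `Tr_1^K(a) = Σ_{g ∈ K} g⁻¹ a g`. Defect zero means `b = Tr_1^H(d)` with `d ∈ kH`. By
Higman's criterion the ideal `kH·n` generated by a central `n ∈ Z(kH)` with `b n = n` is then split
off by a `kH`-linear map which is multiplication by `b` on it; this forces `n = n y n` for some
`y ∈ kH`, so `n = 0` when `n² = 0`. Hence `Z(kH)b` has no nilpotents and, `b` being primitive, no
idempotents besides `0` and `b`; as `k` is algebraically closed, `Z(kH)b = k b`, so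
`b·Tr_1^H(c) = λ(c)·b`. Since `b` is `T`-stable and `H ⊴ G`, the scalar `λ` is constant on
`T`-conjugates, and summing over the cosets of `H` in `T` gives `b·Tr_1^T(c) = |T : H|·λ(c)·b = 0`.
Finally `Tr_1^G(a)` is a sum of `Tr_1^T` of conjugates of `a`, which lie in `kH` again.
-/

open Polynomial
open scoped MonoidAlgebra

section Conjugation

variable {k G}

def conjAlgHom (g : G) : k[G] →ₐ[k] k[G] where
  toFun := conjElt k G g
  map_one' := by rw [conjElt, mul_one, ← map_mul, inv_mul_cancel, map_one]
  map_mul' x y := by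
    simp only [conjElt, mul_assoc]
    rw [← mul_assoc (MonoidAlgebra.of k G g), ← map_mul, mul_inv_cancel, map_one, one_mul]
  map_zero' := by rw [conjElt, mul_zero, zero_mul]
  map_add' x y := by rw [conjElt, conjElt, conjElt, mul_add, add_mul]
  commutes' c := by
    rw [conjElt, ← Algebra.commutes, mul_assoc, ← map_mul, inv_mul_cancel, map_one, mul_one]

@[simp]
theorem coe_conjAlgHom (g : G) : ⇑(conjAlgHom g : k[G] →ₐ[k] k[G]) = conjElt k G g := rfl

theorem conjElt_conjElt (g g' : G) (a : k[G]) :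
    conjElt k G g (conjElt k G g' a) = conjElt k G (g' * g) a := by
  simp only [conjElt, mul_inv_rev, map_mul, mul_assoc]

theorem conjElt_eq_self_iff {g : G} {a : k[G]} :
    conjElt k G g a = a ↔ MonoidAlgebra.of k G g * a = a * MonoidAlgebra.of k G g := by
  have h1 : MonoidAlgebra.of k G g * MonoidAlgebra.of k G g⁻¹ = 1 := by
    rw [← map_mul, mul_inv_cancel, map_one]
  have h2 : MonoidAlgebra.of k G g⁻¹ * MonoidAlgebra.of k G g = 1 := by
    rw [← map_mul, inv_mul_cancel, map_one]
  refine ⟨fun h => ?_, fun h => ?_⟩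
  · conv_lhs => rw [← h, conjElt]
    simp only [← mul_assoc, h1, one_mul]
  · rw [conjElt, mul_assoc, ← h, ← mul_assoc, h2, one_mul]

theorem coeff_conjElt (g : G) (a : k[G]) (x : G) :
    (conjElt k G g a).coeff x = a.coeff (g * x * g⁻¹) := by
  rw [conjElt, MonoidAlgebra.of_apply, MonoidAlgebra.of_apply,
    MonoidAlgebra.coeff_mul_single_apply, MonoidAlgebra.coeff_single_mul_apply, inv_inv, one_mul,
    mul_one, mul_assoc]

end Conjugation

section SubgroupAlgebra

variable {k G} (H : Subgroup G)

variable (k) in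
def subgroupAlgebra : Subalgebra k k[G] where
  carrier := {a | InSubgroupAlgebra k G H a}
  mul_mem' {a b} ha hb g hg := by
    classical
    obtain ⟨x, hx, y, hy, rfl⟩ := Finset.mem_mul.mp
      (MonoidAlgebra.support_coeff_mul_subset a b (Finsupp.mem_support_iff.mpr hg))
    exact H.mul_mem (ha x (Finsupp.mem_support_iff.mp hx)) (hb y (Finsupp.mem_support_iff.mp hy))
  add_mem' {a b} ha hb g hg := by
    rw [MonoidAlgebra.coeff_add, Finsupp.add_apply] at hg
    by_cases hag : a.coeff g = 0
    · exact hb g (by rwa [hag, zero_add] at hg)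
    · exact ha g hag
  algebraMap_mem' c g hg := by
    rw [MonoidAlgebra.coe_algebraMap, Function.comp_apply, MonoidAlgebra.coeff_single] at hg
    rw [(Finsupp.single_apply_ne_zero.mp hg).1]
    exact H.one_mem

theorem of_mem_subgroupAlgebra {g : G} (hg : g ∈ H) :
    MonoidAlgebra.of k G g ∈ subgroupAlgebra k H := by
  intro x hx
  rw [MonoidAlgebra.of_apply, MonoidAlgebra.coeff_single] at hx
  rwa [(Finsupp.single_apply_ne_zero.mp hx).1]

theorem subgroupAlgebra_eq_adjoin :
    subgroupAlgebra k H = Algebra.adjoin k (MonoidAlgebra.of k G '' H) := by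
  refine le_antisymm (fun a ha => ?_) (Algebra.adjoin_le ?_)
  · refine Algebra.span_le_adjoin k _
      (Submodule.span_mono ?_ (MonoidAlgebra.mem_span_support_coeff a))
    exact Set.image_mono fun g hg => ha g (Finsupp.mem_support_iff.mp hg)
  · rintro _ ⟨g, hg, rfl⟩
    exact of_mem_subgroupAlgebra H hg

theorem conjElt_mem_subgroupAlgebra {H : Subgroup G} (hH : H.Normal) (g : G) {a : k[G]}
    (ha : a ∈ subgroupAlgebra k H) : conjElt k G g a ∈ subgroupAlgebra k H := by
  intro x hx
  rw [coeff_conjElt] at hx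
  simpa [mul_assoc] using hH.conj_mem _ (ha _ hx) g⁻¹

variable (k) in
def subgroupAlgebraCenter : Subalgebra k k[G] :=
  subgroupAlgebra k H ⊓ Subalgebra.centralizer k (MonoidAlgebra.of k G '' H)

theorem isCentralIdemOf_iff {e : k[G]} :
    IsCentralIdemOf k G H e ↔ e ∈ subgroupAlgebraCenter k H ∧ IsIdempotentElem e := by
  rw [subgroupAlgebraCenter, Algebra.mem_inf, Subalgebra.mem_centralizer_iff,
    Set.forall_mem_image, and_assoc]
  rfl

theorem commute_of_mem_subgroupAlgebraCenter {H : Subgroup G} {a z : k[G]}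
    (ha : a ∈ subgroupAlgebra k H) (hz : z ∈ subgroupAlgebraCenter k H) : Commute a z := by
  rw [subgroupAlgebra_eq_adjoin] at ha
  refine (Algebra.commute_of_mem_adjoin_of_forall_mem_commute ha fun x hx => ?_).symm
  exact ((Subalgebra.mem_centralizer_iff k).mp hz.2 x hx).symm

end SubgroupAlgebra

theorem sum_eq_sum_quotient_sum_out_mul {Γ M : Type*} [Group Γ] [Fintype Γ] [AddCommMonoid M]
    (L : Subgroup Γ) [Fintype (Γ ⧸ L)] [Fintype L] (f : Γ → M) :
    ∑ x, f x = ∑ q : Γ ⧸ L, ∑ l : L, f (q.out * l) := by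
  rw [← Fintype.sum_prod_type']
  have mk_out_mul (q : Γ ⧸ L) (l : L) : ((q.out * l : Γ) : Γ ⧸ L) = q := by
    rw [QuotientGroup.mk_mul_of_mem _ l.2, QuotientGroup.out_eq']
  refine (Fintype.sum_bijective (fun ql : (Γ ⧸ L) × L => ql.1.out * ql.2) ⟨?_, ?_⟩ _ _
    fun _ => rfl).symm
  · rintro ⟨q, l⟩ ⟨q', l'⟩ h
    obtain rfl : q = q' := by simpa only [mk_out_mul] using congrArg (QuotientGroup.mk (s := L)) h
    simp_all
  · intro x
    exact ⟨((x : Γ ⧸ L), ⟨(x : Γ ⧸ L).out⁻¹ * x, QuotientGroup.eq.mp (QuotientGroup.out_eq' _)⟩),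
      by simp⟩

section RelTrace

variable {k G}

def relTrace (K : Subgroup G) [Fintype K] (a : k[G]) : k[G] :=
  ∑ g : K, conjElt k G g a

theorem sum_conjElt_eq_relTrace_of_isTransversal {K : Subgroup G} [Fintype K] {S : Finset G}
    (hS : IsTransversal G ⊥ K S) (a : k[G]) : ∑ t ∈ S, conjElt k G t a = relTrace K a := by
  refine Finset.sum_subtype S (fun x => ⟨fun hx => hS.1 hx, fun hx => ?_⟩) _
  obtain ⟨t, ⟨htS, hxt⟩, -⟩ := hS.2 x hx
  rwa [mul_inv_eq_one.mp (Subgroup.mem_bot.mp hxt)]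

theorem conjElt_relTrace_of_mem {K : Subgroup G} [Fintype K] {g : G} (hg : g ∈ K) (a : k[G]) :
    conjElt k G g (relTrace K a) = relTrace K a := by
  rw [relTrace, ← coe_conjAlgHom, map_sum]
  simp only [coe_conjAlgHom, conjElt_conjElt]
  exact Fintype.sum_equiv (Equiv.mulRight ⟨g, hg⟩) _ _ fun _ => by simp

theorem conjElt_relTrace {H : Subgroup G} [Fintype H] (hH : H.Normal) (g : G) (a : k[G]) :
    conjElt k G g (relTrace H a) = relTrace H (conjElt k G g a) := by
  rw [relTrace, relTrace, ← coe_conjAlgHom, map_sum]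
  simp only [coe_conjAlgHom, conjElt_conjElt]
  refine (Fintype.sum_equiv (MulAut.conjNormal g).toEquiv _ _ fun h => ?_).symm
  simp [MulAut.conjNormal_apply, mul_assoc]

theorem relTrace_mem_subgroupAlgebraCenter {H : Subgroup G} [Fintype H] {a : k[G]}
    (ha : a ∈ subgroupAlgebra k H) : relTrace H a ∈ subgroupAlgebraCenter k H := by
  refine ⟨Subalgebra.sum_mem _ fun h _ => ?_, ?_⟩
  · exact Subalgebra.mul_mem _
      (Subalgebra.mul_mem _ (of_mem_subgroupAlgebra H (H.inv_mem h.2)) ha)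
      (of_mem_subgroupAlgebra H h.2)
  · rintro _ ⟨g, hg, rfl⟩
    exact conjElt_eq_self_iff.mp (conjElt_relTrace_of_mem hg a)

theorem relTrace_eq_sum_quotient {K L : Subgroup G} [Fintype K] [Fintype L]
    [Fintype (K ⧸ L.subgroupOf K)] (hLK : L ≤ K) (a : k[G]) :
    relTrace K a = ∑ q : K ⧸ L.subgroupOf K, relTrace L (conjElt k G q.out a) := by
  classical
  rw [relTrace, sum_eq_sum_quotient_sum_out_mul (L.subgroupOf K)]
  refine Finset.sum_congr rfl fun q _ => ?_
  refine Fintype.sum_equiv (Subgroup.subgroupOfEquivOfLe hLK).toEquiv _ _ fun l => ?_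
  rw [Subgroup.coe_mul, conjElt_conjElt]
  rfl

end RelTrace

section Higman

variable {k G}

def endRelTrace (H : Subgroup G) [Fintype H] (ψ : k[G] →ₗ[k] k[G]) : k[G] →ₗ[k] k[G] :=
  ∑ h : H, LinearMap.mulLeft k (MonoidAlgebra.of k G h⁻¹) ∘ₗ ψ ∘ₗ
    LinearMap.mulLeft k (MonoidAlgebra.of k G h)

theorem endRelTrace_apply (H : Subgroup G) [Fintype H] (ψ : k[G] →ₗ[k] k[G]) (x : k[G]) :
    endRelTrace H ψ x =
      ∑ h : H, MonoidAlgebra.of k G h⁻¹ * ψ (MonoidAlgebra.of k G h * x) := by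
  simp [endRelTrace]

theorem endRelTrace_mul {H : Subgroup G} [Fintype H] (ψ : k[G] →ₗ[k] k[G]) {a : k[G]}
    (ha : a ∈ subgroupAlgebra k H) (x : k[G]) :
    endRelTrace H ψ (a * x) = a * endRelTrace H ψ x := by
  rw [subgroupAlgebra_eq_adjoin] at ha
  induction ha using Algebra.adjoin_induction generalizing x with
  | mem _ hy =>
    obtain ⟨g, hg, rfl⟩ := hy
    rw [endRelTrace_apply, endRelTrace_apply, Finset.mul_sum]
    refine Fintype.sum_equiv (Equiv.mulRight ⟨g, hg⟩) _ _ fun h => ?_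
    simp only [Equiv.coe_mulRight, Subgroup.coe_mul, mul_inv_rev, map_mul (MonoidAlgebra.of k G),
      mul_assoc]
    rw [← mul_assoc (MonoidAlgebra.of k G g), ← map_mul, mul_inv_cancel, map_one, one_mul]
  | algebraMap c => rw [← Algebra.smul_def, ← Algebra.smul_def, map_smul]
  | add y z _ _ hy hz => rw [add_mul, map_add, hy, hz, add_mul]
  | mul y z _ _ hy hz => rw [mul_assoc, hy, hz, mul_assoc]

theorem eq_zero_of_mul_self_eq_zero {H : Subgroup G} [Fintype H] {d n : k[G]}
    (hd : d ∈ subgroupAlgebra k H) (hn : n ∈ subgroupAlgebraCenter k H)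
    (hdn : relTrace H d * n = n) (hn2 : n * n = 0) : n = 0 := by
  let U : Submodule k k[G] := (Subalgebra.toSubmodule (subgroupAlgebra k H)).map
    (LinearMap.mulRight k n)
  have hU : ∀ a ∈ subgroupAlgebra k H, ∀ u ∈ U, a * u ∈ U := by
    rintro a ha _ ⟨y, hy, rfl⟩
    exact ⟨a * y, Subalgebra.mul_mem _ ha hy, by simp [mul_assoc]⟩
  obtain ⟨π, hπ⟩ := U.subtype.exists_leftInverse_of_injective U.ker_subtype
  -- Higman: `ρ` is `kH`-linear, maps into `U`, and is left multiplication by `Tr_1^H(d)` on `U`.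
  let ρ := endRelTrace H (LinearMap.mulLeft k d ∘ₗ U.subtype ∘ₗ π)
  have hρU (x : k[G]) : ρ x ∈ U := by
    rw [endRelTrace_apply]
    exact Submodule.sum_mem _ fun h _ =>
      hU _ (of_mem_subgroupAlgebra H (H.inv_mem h.2)) _ (hU d hd _ (π _).2)
  have hρ (u : k[G]) (hu : u ∈ U) : ρ u = relTrace H d * u := by
    rw [endRelTrace_apply, relTrace, Finset.sum_mul]
    refine Finset.sum_congr rfl fun h _ => ?_
    have hhu : MonoidAlgebra.of k G h * u ∈ U := hU _ (of_mem_subgroupAlgebra H h.2) u hu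
    have : π (MonoidAlgebra.of k G h * u) = ⟨_, hhu⟩ := LinearMap.congr_fun hπ ⟨_, hhu⟩
    simp only [LinearMap.comp_apply, LinearMap.mulLeft_apply, Submodule.subtype_apply, this,
      conjElt, mul_assoc]
  obtain ⟨y, hy, hρ1⟩ := hρU 1
  calc n = ρ n := by rw [hρ n ⟨1, Subalgebra.one_mem _, one_mul n⟩, hdn]
    _ = n * ρ 1 := by rw [← endRelTrace_mul _ hn.1, mul_one]
    _ = y * (n * n) := by
      rw [← hρ1, LinearMap.mulRight_apply, ← mul_assoc,
        ← (commute_of_mem_subgroupAlgebraCenter hy hn).eq, mul_assoc]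
    _ = 0 := by rw [hn2, mul_zero]

theorem eq_zero_of_isNilpotent {H : Subgroup G} [Fintype H] {d n : k[G]}
    (hd : d ∈ subgroupAlgebra k H) (hn : n ∈ subgroupAlgebraCenter k H) (hnil : IsNilpotent n)
    (hdn : relTrace H d * n = n) : n = 0 := by
  obtain ⟨m, hm⟩ := hnil
  suffices ∀ j, n ^ (j + 1) = 0 → n = 0 from this m (pow_eq_zero_of_le m.le_succ hm)
  intro j
  induction j with
  | zero => simp
  | succ j ih =>
    refine fun hj => ih (eq_zero_of_mul_self_eq_zero hd (pow_mem hn _) ?_ ?_)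
    · rw [pow_succ', ← mul_assoc, hdn]
    · rw [← pow_add]
      exact pow_eq_zero_of_le (by omega) hj

end Higman

section Primitive

variable {K A : Type*} [Field K] [Ring A] [Algebra K A]

theorem exists_forall_dvd_iff_mul_aeval_eq_zero {b z : A} (hbz : Commute b z) :
    ∃ μ : K[X], ∀ q : K[X], μ ∣ q ↔ b * aeval z q = 0 := by
  have hcomm (q : K[X]) : Commute b (aeval z q) :=
    Algebra.commute_of_mem_adjoin_singleton_of_commute (aeval_mem_adjoin_singleton K z) hbz
  let I : Ideal K[X] :=
    { carrier := {q | b * aeval z q = 0}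
      add_mem' := fun {q r} hq hr => by
        simp only [Set.mem_ofPred_eq, map_add, mul_add] at hq hr ⊢
        rw [hq, hr, add_zero]
      zero_mem' := by simp
      smul_mem' := fun q r hr => by
        simp only [Set.mem_ofPred_eq, smul_eq_mul, map_mul] at hr ⊢
        rw [← mul_assoc, (hcomm q).eq, mul_assoc, hr, mul_zero] }
  exact ⟨Submodule.IsPrincipal.generator I, fun q =>
    (Submodule.IsPrincipal.mem_iff_generator_dvd I).symm⟩

theorem exists_eq_X_sub_C_pow_mul_of_not_isUnit [IsAlgClosed K] {μ : K[X]} (hμ0 : μ ≠ 0)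
    (hμ : ¬IsUnit μ) : ∃ (c : K) (m : ℕ) (g : K[X]),
      μ = (X - C c) ^ (m + 1) * g ∧ IsCoprime ((X - C c) ^ (m + 1)) g := by
  obtain ⟨c, hc⟩ := IsAlgClosed.exists_root μ (degree_pos_of_ne_zero_of_nonunit hμ0 hμ).ne'
  obtain ⟨g, hμg, hg⟩ := exists_eq_pow_rootMultiplicity_mul_and_not_dvd μ hμ0 c
  obtain ⟨m, hm⟩ := Nat.exists_eq_add_one_of_ne_zero ((rootMultiplicity_pos hμ0).2 hc).ne'
  exact ⟨c, m, g, hm ▸ hμg, ((irreducible_X_sub_C c).coprime_iff_not_dvd.2 hg).pow_left⟩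

theorem exists_mul_eq_smul_of_primitive [IsAlgClosed K] [FiniteDimensional K A]
    (S : Subalgebra K A) {b z : A} (hbS : b ∈ S) (hzS : z ∈ S) (hb : IsIdempotentElem b)
    (hb0 : b ≠ 0) (hbz : Commute b z)
    (hprim : ∀ e ∈ S, IsIdempotentElem e → b * e = e → e * b = e → e = 0 ∨ e = b)
    (hred : ∀ n ∈ S, IsNilpotent n → b * n = n → n = 0) :
    ∃ c : K, b * z = c • b := by
  have hcomm (q : K[X]) : Commute b (aeval z q) :=
    Algebra.commute_of_mem_adjoin_singleton_of_commute (aeval_mem_adjoin_singleton K z) hbz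
  have hmul (q r : K[X]) : b * aeval z q * (b * aeval z r) = b * aeval z (q * r) := by
    rw [mul_assoc, ← mul_assoc (aeval z q), ← (hcomm q).eq, mul_assoc, ← mul_assoc, hb.eq,
      map_mul]
  have hpow (q : K[X]) (j : ℕ) : (b * aeval z q) ^ (j + 1) = b * aeval z (q ^ (j + 1)) := by
    induction j with
    | zero => simp
    | succ j ih => rw [pow_succ, ih, hmul, ← pow_succ]
  have hmemS (q : K[X]) : b * aeval z q ∈ S :=
    S.mul_mem hbS (by simpa using (aeval (⟨z, hzS⟩ : S) q).2)
  obtain ⟨μ, hμ⟩ := exists_forall_dvd_iff_mul_aeval_eq_zero (K := K) hbz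
  have hμ0 : μ ≠ 0 := by
    rintro rfl
    have := (hμ (minpoly K z)).mpr (by rw [minpoly.aeval, mul_zero])
    exact minpoly.ne_zero (Algebra.IsIntegral.isIntegral z) (zero_dvd_iff.mp this)
  have hμu : ¬IsUnit μ := fun hu => hb0 (by simpa using (hμ 1).mp hu.dvd)
  -- Splitting `μ = (X - c)^(m+1) g` coprimely yields the idempotent `b·(uf)(z)`; by primitivity it
  -- is `0`, making `b z - c b` nilpotent, or `b`, making `X - c` a unit.
  obtain ⟨c, m, g, rfl, u, v, huv⟩ := exists_eq_X_sub_C_pow_mul_of_not_isUnit hμ0 hμu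
  set f := (X - C c) ^ (m + 1)
  have hfg_dvd (q : K[X]) : b * aeval z (q * (f * g)) = 0 := (hμ _).mp (dvd_mul_left _ q)
  have he : IsIdempotentElem (b * aeval z (u * f)) := by
    rw [IsIdempotentElem, hmul, show u * f * (u * f) = u * f - u * v * (f * g) by
      linear_combination (u * f) * huv, map_sub, mul_sub, hfg_dvd, sub_zero]
  rcases hprim _ (hmemS _) he (by rw [← mul_assoc, hb.eq])
    (by rw [mul_assoc, ← (hcomm _).eq, ← mul_assoc, hb.eq]) with he0 | heb
  · have hbf : b * aeval z f = 0 := by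
      rw [← mul_one f, ← huv, mul_add, map_add, mul_add, mul_comm f (u * f), ← hmul, he0,
        zero_mul, zero_add, show f * (v * g) = v * (f * g) by ring, hfg_dvd]
    refine ⟨c, sub_eq_zero.mp (hred _ (S.sub_mem (S.mul_mem hbS hzS) (S.smul_mem hbS c))
      ⟨m + 1, ?_⟩ ?_)⟩
    · rw [show b * z - c • b = b * aeval z (X - C c) by
        simp [mul_sub, Algebra.smul_def, Algebra.commutes c b], hpow]
      exact hbf
    · rw [mul_sub, ← mul_assoc, hb.eq, mul_smul_comm, hb.eq]
  · exfalso
    have hbvg : b * aeval z (v * g) = 0 := by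
      rw [← add_sub_cancel_left (u * f) (v * g), huv, map_sub, mul_sub, map_one, mul_one, heb,
        sub_self]
    have hfv : f ∣ v :=
      (mul_dvd_mul_iff_right (right_ne_zero_of_mul hμ0)).mp ((hμ _).mpr hbvg)
    have hf1 : IsUnit f := isUnit_of_dvd_one (huv ▸ dvd_add (dvd_mul_left f u) (hfv.mul_right g))
    exact not_isUnit_X_sub_C c ((isUnit_pow_iff m.succ_ne_zero).mp hf1)

end Primitive

section Block

variable {p k G} [IsAlgClosed k] [Fintype G] {H : Subgroup G} [Fintype H] {b d : k[G]}

theorem IsBlockOf.exists_mul_relTrace_eq_smul (hb : IsBlockOf k G H b)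
    (hd : d ∈ subgroupAlgebra k H) (hbd : b = relTrace H d) {c : k[G]}
    (hc : c ∈ subgroupAlgebra k H) : ∃ t : k, b * relTrace H c = t • b := by
  obtain ⟨hbZ, hbb⟩ := (isCentralIdemOf_iff H).mp hb.1
  have hz := relTrace_mem_subgroupAlgebraCenter hc
  refine exists_mul_eq_smul_of_primitive _ hbZ hz hbb hb.2.1
    (commute_of_mem_subgroupAlgebraCenter hbZ.1 hz) (fun e he hee hbe heb => ?_)
    fun n hn hnil hbn => eq_zero_of_isNilpotent hd hn hnil (hbd ▸ hbn)
  have hcompl : IsIdempotentElem (b - e) := by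
    rw [IsIdempotentElem, sub_mul, mul_sub, mul_sub, hbb.eq, hbe, heb, hee.eq, sub_self, sub_zero]
  refine (hb.2.2 e (b - e) ((isCentralIdemOf_iff H).mpr ⟨he, hee⟩)
    ((isCentralIdemOf_iff H).mpr ⟨sub_mem hbZ he, hcompl⟩) ?_ ?_ (add_sub_cancel e b).symm).imp
    id fun h => (sub_eq_zero.mp h).symm
  · rw [mul_sub, heb, hee.eq, sub_self]
  · rw [sub_mul, hbe, hee.eq, sub_self]

theorem IsBlockOf.mul_relTrace_eq_zero [CharP k p] (hH : H.Normal) (hb : IsBlockOf k G H b)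
    (hd : d ∈ subgroupAlgebra k H) (hbd : b = relTrace H d) {T : Subgroup G} [Fintype T]
    [Fintype (T ⧸ H.subgroupOf T)] (hT : ∀ g : G, g ∈ T ↔ conjElt k G g b = b)
    (hindex : p ∣ H.relIndex T) {c : k[G]} (hc : c ∈ subgroupAlgebra k H) :
    b * relTrace T c = 0 := by
  obtain ⟨t, ht⟩ := hb.exists_mul_relTrace_eq_smul hd hbd hc
  have hHT : H ≤ T := fun h hh => (hT h).mpr (conjElt_eq_self_iff.mpr (hb.1.2.1 h hh))
  have hcoset (u : G) (hu : u ∈ T) : b * relTrace H (conjElt k G u c) = t • b := by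
    calc b * relTrace H (conjElt k G u c)
        = conjElt k G u b * conjElt k G u (relTrace H c) := by
          rw [(hT u).mp hu, conjElt_relTrace hH]
      _ = conjElt k G u (b * relTrace H c) := (map_mul (conjAlgHom u) _ _).symm
      _ = t • b := by rw [ht, ← coe_conjAlgHom, map_smul, coe_conjAlgHom, (hT u).mp hu]
  have hcard : (Fintype.card (T ⧸ H.subgroupOf T) : k) = 0 := by
    rw [← Nat.card_eq_fintype_card]
    exact (CharP.cast_eq_zero_iff k p _).mpr hindex
  rw [relTrace_eq_sum_quotient hHT, Finset.mul_sum,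
    Finset.sum_congr rfl fun q _ => hcoset _ q.out.2, Finset.sum_const, Finset.card_univ,
    ← Nat.cast_smul_eq_nsmul k, hcard, zero_smul]

end Block

theorem statement3_general (p : ℕ) (k : Type) [Field k] [IsAlgClosed k] [CharP k p]
    (G : Type) [Group G] [Fintype G]
    (H : Subgroup G) (hH : H.Normal)
    (b : MonoidAlgebra k G) (hb : IsBlockOf k G H b)
    (hdefect : IsDefectGroupOf k G H b ⊥)
    (T : Subgroup G) (hT : ∀ g : G, g ∈ T ↔ conjElt k G g b = b)
    (hindex : p ∣ H.relIndex T) :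
    ∀ y ∈ relTraceSet k G {a | InSubgroupAlgebra k G H a} ⊥ ⊤, b * y = 0 := by
  classical
  rintro y ⟨a, ha, -, S, hS, rfl⟩
  obtain ⟨-, ⟨d, hd, -, S', hS', hbd⟩, -⟩ := hdefect
  rw [sum_conjElt_eq_relTrace_of_isTransversal hS'] at hbd
  rw [sum_conjElt_eq_relTrace_of_isTransversal hS, relTrace_eq_sum_quotient (le_top : T ≤ ⊤),
    Finset.mul_sum]
  exact Finset.sum_eq_zero fun q _ =>
    hb.mul_relTrace_eq_zero hH hd hbd hT hindex (conjElt_mem_subgroupAlgebra hH _ ha)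

theorem statement3 (p : ℕ) [Fact p.Prime] (k : Type) [Field k] [IsAlgClosed k] [CharP k p]
    (G : Type) [Group G] [Fintype G]
    (H : Subgroup G) (hH : H.Normal)
    (b : MonoidAlgebra k G) (hb : IsBlockOf k G H b)
    (hdefect : IsDefectGroupOf k G H b ⊥)
    (T : Subgroup G) (hT : ∀ g : G, g ∈ T ↔ conjElt k G g b = b)
    (hindex : p ∣ H.relIndex T) :
    ∀ y ∈ relTraceSet k G {a | InSubgroupAlgebra k G H a} ⊥ ⊤, b * y = 0 :=
  statement3_general p k G H hH b hb hdefect T hT hindex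

end LowerDefect
end
end

section
/- Let P be a finite p-group and let 𝒳 be a set of subgroups of P with the property that whenever S ∈ 𝒳 and R is a normal subgroup of S, then R ∈ 𝒳. Let Q be a subgroup of P, let E ≤ P and F ≤ Q with E ∈ 𝒳 and F ∈ 𝒳, and suppose that |L| ≤ |F| for every subgroup L ≤ Q with L ∈ 𝒳. Then |Q : F| ≤ |P : E|. -/
noncomputable section

/-!
Since `P` is nilpotent, every subgroup of `P` is subnormal, so a family of subgroups closed under
passing to normal subgroups is closed under passing to arbitrary subgroups. Hence `E ⊓ Q ∈ 𝒳`,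
so `|E ⊓ Q| ≤ |F|` by maximality of `F`, and therefore
`|Q : F| ≤ |Q : E ⊓ Q| = |EQ : E| ≤ |P : E|`.
-/

namespace Subgroup

variable {G : Type*} [Group G]

theorem IsSubnormal.of_isNilpotent [Finite G] [Group.IsNilpotent G] (H : Subgroup G) :
    H.IsSubnormal := by
  induction H using WellFoundedGT.induction with
  | _ H ih =>
    by_cases hH : H = ⊤
    · exact hH ▸ .top
    · exact .step H _ le_normalizer
        (ih _ (Group.normalizerCondition_of_isNilpotent H (lt_top_iff_ne_top.mpr hH)))
        inferInstance

section NormalClosed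

variable {X : Set (Subgroup G)}
  (hX : ∀ S ∈ X, ∀ R : Subgroup G, R ≤ S → (R.subgroupOf S).Normal → R ∈ X)
include hX

theorem map_subtype_mem_of_isSubnormal {S : Subgroup G} (hS : S ∈ X) {K : Subgroup S}
    (hK : K.IsSubnormal) : K.map S.subtype ∈ X := by
  induction hK with
  | top => rwa [← MonoidHom.range_eq_map, range_subtype]
  | step H K hHK _ _ ih =>
    refine hX _ ih _ (map_mono hHK) ?_
    rw [normal_subgroupOf_iff_le_normalizer (map_mono hHK)]
    exact (map_mono (le_normalizer_of_normal_subgroupOf hHK)).trans (le_normalizer_map _)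

theorem mem_of_isSubnormal_of_le {S R : Subgroup G} (hS : S ∈ X) (hRS : R ≤ S)
    (hR : R.IsSubnormal) : R ∈ X := by
  simpa [subgroupOf_map_subtype, hRS] using map_subtype_mem_of_isSubnormal hX hS hR.subgroupOf

end NormalClosed

theorem relIndex_le_relIndex_of_card_le {H L K : Subgroup G} [Finite K] (hHK : H ≤ K)
    (hLK : L ≤ K) (hcard : Nat.card L ≤ Nat.card H) : H.relIndex K ≤ L.relIndex K := by
  have : Finite H := Finite.of_injective _ (inclusion_injective hHK)
  have card_mul_relIndex (M : Subgroup G) (hMK : M ≤ K) :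
      Nat.card M * M.relIndex K = Nat.card K := by
    simpa only [relIndex_bot_left] using relIndex_mul_relIndex ⊥ M K bot_le hMK
  refine Nat.le_of_mul_le_mul_left ?_ (Nat.card_pos (α := H))
  calc Nat.card H * H.relIndex K = Nat.card L * L.relIndex K := by
        rw [card_mul_relIndex H hHK, card_mul_relIndex L hLK]
    _ ≤ Nat.card H * L.relIndex K := Nat.mul_le_mul_right _ hcard

end Subgroup

namespace LowerDefect

theorem statement14_general (p : ℕ) [Fact p.Prime] (P : Type) [Group P] [Fintype P]
    (hP : IsPGroup p P)
    (X : Set (Subgroup P))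
    (hX : ∀ S ∈ X, ∀ R : Subgroup P, R ≤ S → (R.subgroupOf S).Normal → R ∈ X)
    (Q : Subgroup P) (E F : Subgroup P)
    (hE : E ∈ X) (hFQ : F ≤ Q)
    (hmax : ∀ L : Subgroup P, L ≤ Q → L ∈ X → Nat.card L ≤ Nat.card F) :
    F.relIndex Q ≤ E.index := by
  have := hP.isNilpotent
  have hEQ : E ⊓ Q ∈ X :=
    Subgroup.mem_of_isSubnormal_of_le hX hE inf_le_left (.of_isNilpotent _)
  calc F.relIndex Q ≤ (E ⊓ Q).relIndex Q :=
        Subgroup.relIndex_le_relIndex_of_card_le hFQ inf_le_right (hmax _ inf_le_right hEQ)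
    _ = E.relIndex Q := Subgroup.inf_relIndex_right E Q
    _ ≤ E.relIndex ⊤ := Subgroup.relIndex_le_of_le_right le_top
        (E.relIndex_top_right ▸ Subgroup.index_ne_zero_of_finite)
    _ = E.index := E.relIndex_top_right

theorem statement14 (p : ℕ) [Fact p.Prime] (P : Type) [Group P] [Fintype P]
    (hP : IsPGroup p P)
    (X : Set (Subgroup P))
    (hX : ∀ S ∈ X, ∀ R : Subgroup P, R ≤ S → (R.subgroupOf S).Normal → R ∈ X)
    (Q : Subgroup P) (E F : Subgroup P)
    (hE : E ∈ X) (hFQ : F ≤ Q) (hF : F ∈ X)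
    (hmax : ∀ L : Subgroup P, L ≤ Q → L ∈ X → Nat.card L ≤ Nat.card F) :
    F.relIndex Q ≤ E.index :=
  statement14_general p P hP X hX Q E F hE hFQ hmax

end LowerDefect
end
end
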